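/- arXiv:1605.04411 — 4 statements merged into one kernel-verified Lean document; each statement's English description precedes it below -/
import Mathlib

section
/- For all f, g, h ∈ L¹(ℝ), (f # g) # h = f # (g # h) almost everywhere. -/
open MeasureTheory Real Filter Topology
open scoped Convolution

noncomputable def hash (f g : ℝ → ℝ) : ℝ → ℝ :=
  fun x => (1/2) * ∫ y, (f (x + y) + f (x - y)) * g y

noncomputable def hartley (f : ℝ → ℝ) : ℝ → ℝ :=
  fun t => (1 / Real.sqrt (2 * Real.pi)) * ∫ x, f x * (Real.cos (x * t) + Real.sin (x * t))

noncomputable def cosT (f : ℝ → ℝ) : ℝ → ℝ :=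
  fun t => ∫ x, f x * Real.cos (x * t)

noncomputable def fourierT (f : ℝ → ℝ) : ℝ → ℂ :=
  fun t => (1 / Real.sqrt (2 * Real.pi) : ℂ) * ∫ x, (f x : ℂ) * Complex.exp (-Complex.I * x * t)



noncomputable def ev (g : ℝ → ℝ) : ℝ → ℝ := fun y => (g y + g (-y)) / 2

lemma ev_int {g : ℝ → ℝ} (hg : Integrable g) : Integrable (ev g) :=
  (hg.add hg.comp_neg).div_const 2

lemma ev_even (g : ℝ → ℝ) (y : ℝ) : ev g (-y) = ev g y := by
  simp [ev, add_comm]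

noncomputable def cv (f g : ℝ → ℝ) : ℝ → ℝ := f ⋆[ContinuousLinearMap.mul ℝ ℝ] g

lemma cv_apply (f g : ℝ → ℝ) (x : ℝ) : cv f g x = ∫ t, f t * g (x - t) := by
  simp [cv, convolution_def]

-- key lemma A
lemma hashA {f g : ℝ → ℝ} (hf : Integrable f) (hg : Integrable g) :
    hash f g =ᵐ[volume] cv f (ev g) := by
  have h1 := hf.ae_convolution_exists (ContinuousLinearMap.mul ℝ ℝ) hg
  have h2 := hf.ae_convolution_exists (ContinuousLinearMap.mul ℝ ℝ) hg.comp_neg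
  filter_upwards [h1, h2] with x hx1 hx2
  have hx1' : Integrable (fun t => f t * g (x - t)) := by simpa [ConvolutionExistsAt] using hx1
  have hx2' : Integrable (fun t => f t * g (t - x)) := by
    have := hx2
    simp only [ConvolutionExistsAt, ContinuousLinearMap.mul_apply'] at this
    simpa [neg_sub] using this
  have I1 : Integrable (fun y => f (x - y) * g y) := by
    have := hx1'.comp_sub_left x
    simpa using this
  have I2 : Integrable (fun y => f (x + y) * g y) := by
    have := hx2'.comp_add_left x
    simpa using this
  have I3 : Integrable (fun y => f (x - y) * g (-y)) := by
    have := I2.comp_neg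
    simpa [sub_eq_add_neg] using this
  have e1 : (∫ y, f (x + y) * g y) = ∫ y, f (x - y) * g (-y) := by
    rw [← integral_neg_eq_self (fun y => f (x + y) * g y) volume]
    simp [sub_eq_add_neg]
  calc hash f g x = (1/2) * ∫ y, (f (x + y) * g y + f (x - y) * g y) := by
        show (1/2) * (∫ y, (f (x + y) + f (x - y)) * g y) = _
        simp_rw [add_mul]
    _ = (1/2) * ((∫ y, f (x + y) * g y) + ∫ y, f (x - y) * g y) := by
        rw [integral_add I2 I1]
    _ = (1/2) * ((∫ y, f (x - y) * g (-y)) + ∫ y, f (x - y) * g y) := by rw [e1]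
    _ = (1/2) * ∫ y, (f (x - y) * g (-y) + f (x - y) * g y) := by rw [integral_add I3 I1]
    _ = ∫ y, f (x - y) * ev g y := by
        rw [← integral_const_mul]
        congr 1; ext y; simp only [ev]; ring
    _ = ∫ t, f t * ev g (x - t) := by
        rw [← integral_sub_left_eq_self (fun t => f t * ev g (x - t)) volume x]
        simp [sub_sub_cancel]
    _ = cv f (ev g) x := (cv_apply f (ev g) x).symm

-- key lemma B: even part of a convolution with an even kernel
lemma hashB {g k : ℝ → ℝ} (hg : Integrable g) (hk : Integrable k)
    (hke : ∀ y, k (-y) = k y) :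
    ev (cv g k) =ᵐ[volume] cv (ev g) k := by
  have h1 := hg.ae_convolution_exists (ContinuousLinearMap.mul ℝ ℝ) hk
  have h2 := hg.comp_neg.ae_convolution_exists (ContinuousLinearMap.mul ℝ ℝ) hk
  have hneg : ∀ᵐ (x : ℝ), ConvolutionExistsAt (fun t => g (-t)) k x
      (ContinuousLinearMap.mul ℝ ℝ) volume := h2
  filter_upwards [h1, hneg] with x hx1 hx2
  have hx1' : Integrable (fun t => g t * k (x - t)) := by simpa [ConvolutionExistsAt] using hx1
  have hx2' : Integrable (fun t => g (-t) * k (x - t)) := by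
    simpa [ConvolutionExistsAt] using hx2
  have e2 : cv g k (-x) = ∫ t, g (-t) * k (x - t) := by
    rw [cv_apply, ← integral_neg_eq_self (fun t => g t * k (-x - t)) volume]
    congr 1; ext t
    rw [← hke (x - t)]
    ring_nf
  calc ev (cv g k) x = (cv g k x + cv g k (-x)) / 2 := rfl
    _ = ((∫ t, g t * k (x - t)) + ∫ t, g (-t) * k (x - t)) / 2 := by rw [cv_apply, e2]
    _ = (∫ t, (g t * k (x - t) + g (-t) * k (x - t))) / 2 := by rw [integral_add hx1' hx2']
    _ = ∫ t, ev g t * k (x - t) := by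
        rw [← integral_div]
        congr 1; ext t; simp only [ev]; ring
    _ = cv (ev g) k x := (cv_apply _ _ _).symm

lemma hash_congr_left {F F' : ℝ → ℝ} (hFF' : F =ᵐ[volume] F') (h : ℝ → ℝ) :
    hash F h = hash F' h := by
  funext x
  show (1/2) * _ = (1/2) * _
  congr 1
  apply integral_congr_ae
  have h1 : ∀ᵐ y, F (x + y) = F' (x + y) :=
    (measurePreserving_add_left volume x).quasiMeasurePreserving.ae hFF'
  have h2 : ∀ᵐ y, F (x - y) = F' (x - y) :=
    (Measure.measurePreserving_sub_left volume x).quasiMeasurePreserving.ae hFF'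
  filter_upwards [h1, h2] with y hy1 hy2
  rw [hy1, hy2]

lemma hash_congr_right (f : ℝ → ℝ) {G G' : ℝ → ℝ} (hGG' : G =ᵐ[volume] G') :
    hash f G = hash f G' := by
  funext x
  show (1/2) * _ = (1/2) * _
  congr 1
  apply integral_congr_ae
  filter_upwards [hGG'] with y hy
  rw [hy]

lemma cv_assoc {u v w : ℝ → ℝ} (hu : Integrable u) (hv : Integrable v) (hw : Integrable w) :
    cv (cv u v) w =ᵐ[volume] cv u (cv v w) := by
  have hvw : Integrable ((fun x => ‖v x‖) ⋆[ContinuousLinearMap.mul ℝ ℝ] fun x => ‖w x‖) :=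
    hv.norm.integrable_convolution _ hw.norm
  have hfgk := hu.norm.ae_convolution_exists (ContinuousLinearMap.mul ℝ ℝ) hvw
  filter_upwards [hfgk] with x₀ hx₀
  exact convolution_assoc (ContinuousLinearMap.mul ℝ ℝ) (ContinuousLinearMap.mul ℝ ℝ)
    (ContinuousLinearMap.mul ℝ ℝ) (ContinuousLinearMap.mul ℝ ℝ)
    (fun x y z => mul_assoc x y z)
    hu.aestronglyMeasurable hv.aestronglyMeasurable hw.aestronglyMeasurable
    (hu.ae_convolution_exists _ hv)
    (hv.norm.ae_convolution_exists _ hw.norm) hx₀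

theorem stmt1 (f g h : ℝ → ℝ) (hf : Integrable f) (hg : Integrable g) (hh : Integrable h) :
    hash (hash f g) h =ᵐ[volume] hash f (hash g h) := by
  have hA := hashA hf hg
  have hfg_int : Integrable (cv f (ev g)) := hf.integrable_convolution _ (ev_int hg)
  have hgh_int : Integrable (cv g (ev h)) := hg.integrable_convolution _ (ev_int hh)
  calc hash (hash f g) h = hash (cv f (ev g)) h := hash_congr_left hA h
    _ =ᵐ[volume] cv (cv f (ev g)) (ev h) := hashA hfg_int hh
    _ =ᵐ[volume] cv f (cv (ev g) (ev h)) := cv_assoc hf (ev_int hg) (ev_int hh)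
    _ =ᵐ[volume] hash f (hash g h) := by
        have h1 : hash f (hash g h) = hash f (cv g (ev h)) :=
          hash_congr_right f (hashA hg hh)
        have h2 : cv f (ev (cv g (ev h))) = cv f (cv (ev g) (ev h)) :=
          convolution_congr _ EventuallyEq.rfl (hashB hg (ev_int hh) (ev_even h))
        have h3 := hashA hf hgh_int
        rw [h1, ← h2]
        exact h3.symm
end

section
/- For all f, g, h ∈ L¹(ℝ), f # (g # h) = (f # h) # g almost everywhere (the 'mixed commutativity' axiom A₄′). -/
open MeasureTheory Real Filter Topology

open scoped Convolution

noncomputable def cnv (f g : ℝ → ℝ) : ℝ → ℝ := f ⋆[ContinuousLinearMap.mul ℝ ℝ] g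

def ngt (f : ℝ → ℝ) : ℝ → ℝ := fun x => f (-x)

lemma ngt_ngt (f : ℝ → ℝ) : ngt (ngt f) = f := by
  funext x; simp [ngt]

lemma ngt_int {f : ℝ → ℝ} (hf : Integrable f) : Integrable (ngt f) := hf.comp_neg

lemma cnv_def (f g : ℝ → ℝ) (x : ℝ) : cnv f g x = ∫ t, f t * g (x - t) := rfl

lemma mulflip : (ContinuousLinearMap.mul ℝ ℝ).flip = ContinuousLinearMap.mul ℝ ℝ := by
  ext x y
  simp [mul_comm]

lemma cnv_comm (f g : ℝ → ℝ) : cnv f g = cnv g f := by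
  unfold cnv
  rw [← convolution_flip, mulflip]

lemma cnv_int {f g : ℝ → ℝ} (hf : Integrable f) (hg : Integrable g) :
    Integrable (cnv f g) := hf.integrable_convolution _ hg

lemma cnv_ex {f g : ℝ → ℝ} (hf : Integrable f) (hg : Integrable g) :
    ∀ᵐ x, Integrable (fun t => f t * g (x - t)) :=
  hf.ae_convolution_exists (ContinuousLinearMap.mul ℝ ℝ) hg

lemma cnv_neg (f g : ℝ → ℝ) (y : ℝ) : cnv f g (-y) = cnv (ngt f) (ngt g) y := by
  simp only [cnv_def, ngt]
  rw [← integral_neg_eq_self (fun t => f t * g (-y - t)) volume]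
  congr 1
  funext t
  ring_nf

lemma assoc_ae {f g k : ℝ → ℝ} (hf : Integrable f) (hg : Integrable g) (hk : Integrable k) :
    cnv (cnv f g) k =ᵐ[volume] fun x => cnv f (cnv g k) x := by
  have hfgk := hf.norm.ae_convolution_exists (ContinuousLinearMap.mul ℝ ℝ)
    (hg.norm.integrable_convolution (ContinuousLinearMap.mul ℝ ℝ) hk.norm)
  filter_upwards [hfgk] with x₀ hx₀
  exact convolution_assoc (ContinuousLinearMap.mul ℝ ℝ) (ContinuousLinearMap.mul ℝ ℝ)
    (ContinuousLinearMap.mul ℝ ℝ) (ContinuousLinearMap.mul ℝ ℝ)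
    (fun x y z => mul_assoc x y z) hf.aestronglyMeasurable hg.aestronglyMeasurable
    hk.aestronglyMeasurable (hf.ae_convolution_exists _ hg)
    (hg.norm.ae_convolution_exists _ hk.norm) hx₀

lemma smul_cnv (c : ℝ) (A f : ℝ → ℝ) :
    cnv (fun y => c * A y) f = fun x => c * cnv A f x := by
  funext x
  simp only [cnv_def, mul_assoc]
  exact integral_const_mul c _

lemma cnv_smul (c : ℝ) (f A : ℝ → ℝ) :
    cnv f (fun y => c * A y) = fun x => c * cnv f A x := by
  funext x
  simp only [cnv_def, mul_left_comm]
  exact integral_const_mul c _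

lemma add_cnv_ae {A B f : ℝ → ℝ} (hA : Integrable A) (hB : Integrable B) (hf : Integrable f) :
    cnv (fun y => A y + B y) f =ᵐ[volume] fun x => cnv A f x + cnv B f x := by
  filter_upwards [cnv_ex hA hf, cnv_ex hB hf] with x h1 h2
  simp only [cnv_def, add_mul]
  exact integral_add h1 h2

lemma cnv_add_ae {f A B : ℝ → ℝ} (hf : Integrable f) (hA : Integrable A) (hB : Integrable B) :
    cnv f (fun y => A y + B y) =ᵐ[volume] fun x => cnv f A x + cnv f B x := by
  filter_upwards [cnv_ex hf hA, cnv_ex hf hB] with x h1 h2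
  simp only [cnv_def, mul_add]
  exact integral_add h1 h2

lemma hash_congr_right_s2 {f g₁ g₂ : ℝ → ℝ} (hg : g₁ =ᵐ[volume] g₂) : hash f g₁ = hash f g₂ := by
  funext x
  unfold _root_.hash
  congr 1
  refine integral_congr_ae ?_
  filter_upwards [hg] with y hy
  rw [hy]

lemma hash_congr_left_s2 {f₁ f₂ g : ℝ → ℝ} (hff : f₁ =ᵐ[volume] f₂) : hash f₁ g = hash f₂ g := by
  funext x
  unfold _root_.hash
  congr 1
  refine integral_congr_ae ?_
  have h1 := (measurePreserving_add_left volume x).quasiMeasurePreserving.ae_eq_comp hff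
  have h2 := (Measure.measurePreserving_sub_left volume x).quasiMeasurePreserving.ae_eq_comp hff
  filter_upwards [h1, h2] with y e1 e2
  simp only [Function.comp_apply] at e1 e2
  rw [e1, e2]

lemma hash_ae {f g : ℝ → ℝ} (hf : Integrable f) (hg : Integrable g) :
    hash f g =ᵐ[volume] fun x => (1/2) * (cnv (ngt g) f x + cnv g f x) := by
  filter_upwards [cnv_ex (ngt_int hg) hf, cnv_ex hg hf] with x h1 h2
  have h2' : Integrable fun y => f (x - y) * g y := by
    refine h2.congr (Eventually.of_forall fun y => ?_)
    exact mul_comm _ _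
  have h1' : Integrable fun y => f (x + y) * g y := by
    have := h1.comp_neg
    refine this.congr (Eventually.of_forall fun y => ?_)
    simp [ngt, mul_comm, sub_neg_eq_add]
  show (1/2) * ∫ y, (f (x + y) + f (x - y)) * g y = _
  have e1 : ∫ y, (f (x + y) + f (x - y)) * g y
      = (∫ y, f (x + y) * g y) + ∫ y, f (x - y) * g y := by
    simp_rw [add_mul]
    exact integral_add h1' h2'
  have e2 : ∫ y, f (x + y) * g y = cnv (ngt g) f x := by
    rw [cnv_def, ← integral_neg_eq_self (fun y => f (x + y) * g y) volume]
    congr 1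
    funext t
    simp [ngt, mul_comm, sub_eq_add_neg]
  have e3 : ∫ y, f (x - y) * g y = cnv g f x := by
    rw [cnv_def]
    congr 1
    funext t
    exact mul_comm _ _
  rw [e1, e2, e3]

theorem stmt2 (f g h : ℝ → ℝ) (hf : Integrable f) (hg : Integrable g) (hh : Integrable h) :
    hash f (hash g h) =ᵐ[volume] hash (hash f h) g := by
  have hg' : Integrable (ngt g) := ngt_int hg
  have hh' : Integrable (ngt h) := ngt_int hh
  have hB₁ : Integrable (cnv (ngt h) f) := cnv_int hh' hf
  have hB₂ : Integrable (cnv h f) := cnv_int hh hf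
  have hA₁ : Integrable (cnv (ngt h) g) := cnv_int hh' hg
  have hA₂ : Integrable (cnv h g) := cnv_int hh hg
  have hC₁ : Integrable (cnv h (ngt g)) := cnv_int hh hg'
  have hC₂ : Integrable (cnv (ngt h) (ngt g)) := cnv_int hh' hg'
  have hK : Integrable (fun x => (1/2) * (cnv (ngt h) g x + cnv h g x)) :=
    (hA₁.add hA₂).const_mul _
  have hF : Integrable (fun x => (1/2) * (cnv (ngt h) f x + cnv h f x)) :=
    (hB₁.add hB₂).const_mul _
  have eK : hash f (hash g h) = hash f (fun x => (1/2) * (cnv (ngt h) g x + cnv h g x)) :=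
    hash_congr_right_s2 (hash_ae hg hh)
  have eF : hash (hash f h) g = hash (fun x => (1/2) * (cnv (ngt h) f x + cnv h f x)) g :=
    hash_congr_left_s2 (hash_ae hf hh)
  have engtK : ngt (fun x => (1/2) * (cnv (ngt h) g x + cnv h g x))
      = fun y => (1/2) * (cnv h (ngt g) y + cnv (ngt h) (ngt g) y) := by
    funext y
    show (1/2) * (cnv (ngt h) g (-y) + cnv h g (-y)) = _
    rw [cnv_neg, cnv_neg, ngt_ngt]
  have eq1 : cnv (ngt (fun x => (1/2) * (cnv (ngt h) g x + cnv h g x))) f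
      = fun x => (1/2) * cnv (fun y => cnv h (ngt g) y + cnv (ngt h) (ngt g) y) f x := by
    rw [engtK]; exact smul_cnv _ _ _
  have eq2 : cnv (fun x => (1/2) * (cnv (ngt h) g x + cnv h g x)) f
      = fun x => (1/2) * cnv (fun y => cnv (ngt h) g y + cnv h g y) f x := smul_cnv _ _ _
  have eq3 : cnv (ngt g) (fun x => (1/2) * (cnv (ngt h) f x + cnv h f x))
      = fun x => (1/2) * cnv (ngt g) (fun y => cnv (ngt h) f y + cnv h f y) x := cnv_smul _ _ _
  have eq4 : cnv g (fun x => (1/2) * (cnv (ngt h) f x + cnv h f x))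
      = fun x => (1/2) * cnv g (fun y => cnv (ngt h) f y + cnv h f y) x := cnv_smul _ _ _
  have a1 : cnv (cnv h (ngt g)) f =ᵐ[volume] fun x => cnv (ngt g) (cnv h f) x := by
    rw [cnv_comm h (ngt g)]; exact assoc_ae hg' hh hf
  have a2 : cnv (cnv (ngt h) (ngt g)) f =ᵐ[volume] fun x => cnv (ngt g) (cnv (ngt h) f) x := by
    rw [cnv_comm (ngt h) (ngt g)]; exact assoc_ae hg' hh' hf
  have a3 : cnv (cnv (ngt h) g) f =ᵐ[volume] fun x => cnv g (cnv (ngt h) f) x := by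
    rw [cnv_comm (ngt h) g]; exact assoc_ae hg hh' hf
  have a4 : cnv (cnv h g) f =ᵐ[volume] fun x => cnv g (cnv h f) x := by
    rw [cnv_comm h g]; exact assoc_ae hg hh hf
  rw [eK, eF]
  filter_upwards [hash_ae hf hK, hash_ae hF hg,
    add_cnv_ae hC₁ hC₂ hf, add_cnv_ae hA₁ hA₂ hf,
    cnv_add_ae hg' hB₁ hB₂, cnv_add_ae hg hB₁ hB₂,
    a1, a2, a3, a4] with x e1 e2 e3 e4 e5 e6 f1 f2 f3 f4
  rw [e1, e2, congrFun eq1 x, congrFun eq2 x, congrFun eq3 x, congrFun eq4 x,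
    e3, e4, e5, e6, f1, f2, f3, f4]
  ring
end

section
/- Convolution theorem for the Hartley transform: for f, g ∈ L¹(ℝ), H(f # g)(t) = H(f)(t) · C(g)(t) for all t ∈ ℝ, where C(g)(t) = ∫_ℝ g(x) cos(xt) dx. -/
open MeasureTheory Real Filter Topology

/-!
Write `cas t x = cos (x t) + sin (x t)` for the Hartley kernel. The addition formulas give
`cas t (x - y) + cas t (x + y) = 2 cos (y t) · cas t x`, so translating `x` in the inner integral
turns `∫ (f (x + y) + f (x - y)) cas t x dx` into `2 cos (y t) · ∫ f cas t`. After Fubini, which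
is justified because `(x, y) ↦ f (x ± y) g y` is integrable on `ℝ × ℝ` by translation invariance
of Lebesgue measure, integrating against `g y / 2` gives `H(f)(t) · C(g)(t)`.
-/

namespace MeasureTheory

variable {G L : Type*} [MeasurableSpace G] [AddGroup G] [MeasurableAdd₂ G] [NormedRing L]
  {μ ν : Measure G} [SFinite μ] [SFinite ν] [μ.IsAddRightInvariant] {f g : G → L}

theorem Integrable.comp_add_mul_prod (hf : Integrable f μ) (hg : Integrable g ν) :
    Integrable (fun p : G × G => f (p.1 + p.2) * g p.2) (μ.prod ν) :=
  (measurePreserving_add_prod μ ν).integrable_comp_of_integrable (hf.mul_prod hg)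

theorem Integrable.comp_sub_mul_prod [MeasurableNeg G] (hf : Integrable f μ)
    (hg : Integrable g ν) :
    Integrable (fun p : G × G => f (p.1 - p.2) * g p.2) (μ.prod ν) :=
  (measurePreserving_sub_prod μ ν).integrable_comp_of_integrable (hf.mul_prod hg)

end MeasureTheory

theorem integral_hash_mul {f g w : ℝ → ℝ} {C : ℝ} (hf : Integrable f) (hg : Integrable g)
    (hw : AEStronglyMeasurable w) (hwC : ∀ x, |w x| ≤ C) :
    ∫ x, hash f g x * w x = 1 / 2 * ∫ y, g y * ∫ x, (f (x + y) + f (x - y)) * w x := by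
  have hF : Integrable (Function.uncurry fun x y => (f (x + y) + f (x - y)) * g y * w x)
      (volume.prod volume) := by
    have h := ((hf.comp_add_mul_prod hg).fun_add (hf.comp_sub_mul_prod hg)).mul_bdd
      hw.comp_fst (ae_of_all _ fun p => hwC p.1)
    simpa only [Function.uncurry_def, add_mul] using h
  have hinner (x : ℝ) :
      hash f g x * w x = 1 / 2 * ∫ y, (f (x + y) + f (x - y)) * g y * w x := by
    rw [_root_.hash, mul_assoc, integral_mul_const]
  have hswapped (y : ℝ) :
      ∫ x, (f (x + y) + f (x - y)) * g y * w x = g y * ∫ x, (f (x + y) + f (x - y)) * w x := by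
    rw [← integral_const_mul]
    congr 1 with x
    ring
  simp only [hinner, integral_const_mul, integral_integral_swap hF, hswapped]

noncomputable def cas (t x : ℝ) : ℝ := cos (x * t) + sin (x * t)

theorem continuous_cas (t : ℝ) : Continuous (cas t) := by
  unfold cas; fun_prop

theorem abs_cas_le (t x : ℝ) : |cas t x| ≤ 2 :=
  (abs_add_le _ _).trans (by linarith [abs_cos_le_one (x * t), abs_sin_le_one (x * t)])

theorem cas_sub_add_cas_add (t x y : ℝ) :
    cas t (x - y) + cas t (x + y) = 2 * cos (y * t) * cas t x := by
  simp only [cas, sub_mul, add_mul, cos_sub, sin_sub, cos_add, sin_add]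
  ring

theorem MeasureTheory.Integrable.mul_cas {f : ℝ → ℝ} (hf : Integrable f) (t : ℝ) :
    Integrable (fun x => f x * cas t x) :=
  hf.mul_bdd (continuous_cas t).aestronglyMeasurable (ae_of_all _ (abs_cas_le t))

theorem integral_translates_mul_cas {f : ℝ → ℝ} (hf : Integrable f) (t y : ℝ) :
    ∫ x, (f (x + y) + f (x - y)) * cas t x = 2 * cos (y * t) * ∫ x, f x * cas t x := by
  have hshift (s : ℝ) : ∫ x, f (x + s) * cas t x = ∫ x, f x * cas t (x - s) := by
    simpa only [add_sub_cancel_right] using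
      integral_add_right_eq_self (μ := volume) (fun x => f x * cas t (x - s)) s
  have hint (s : ℝ) : Integrable (fun x => f x * cas t (x - s)) :=
    hf.mul_bdd ((continuous_cas t).comp (continuous_sub_right s)).aestronglyMeasurable
      (ae_of_all _ fun x => abs_cas_le t (x - s))
  calc ∫ x, (f (x + y) + f (x - y)) * cas t x
      = (∫ x, f (x + y) * cas t x) + ∫ x, f (x + -y) * cas t x := by
        simp only [← sub_eq_add_neg, add_mul]
        exact integral_add ((hf.comp_add_right y).mul_cas t) ((hf.comp_sub_right y).mul_cas t)
    _ = ∫ x, f x * (cas t (x - y) + cas t (x + y)) := by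
        rw [hshift, hshift]
        simp only [sub_neg_eq_add, mul_add]
        exact (integral_add (hint y) (by simpa using hint (-y))).symm
    _ = 2 * cos (y * t) * ∫ x, f x * cas t x := by
        simp only [cas_sub_add_cas_add, ← integral_const_mul]
        congr 1 with x
        ring

theorem stmt14 (f g : ℝ → ℝ) (hf : Integrable f) (hg : Integrable g) :
    ∀ t : ℝ, hartley (hash f g) t = hartley f t * cosT g t := by
  intro t
  calc hartley (hash f g) t = 1 / √(2 * π) * ∫ x, hash f g x * cas t x := rfl
    _ = 1 / √(2 * π) * (1 / 2 * ∫ y, g y * (2 * cos (y * t) * ∫ x, f x * cas t x)) := by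
        simp only [integral_hash_mul hf hg (continuous_cas t).aestronglyMeasurable (abs_cas_le t),
          integral_translates_mul_cas hf]
    _ = hartley f t * cosT g t := by
        change _ = (1 / √(2 * π) * ∫ x, f x * cas t x) * ∫ y, g y * cos (y * t)
        have hrearrange (y : ℝ) : g y * (2 * cos (y * t) * ∫ x, f x * cas t x) =
            2 * (∫ x, f x * cas t x) * (g y * cos (y * t)) := by ring
        simp only [hrearrange, integral_const_mul]
        ring
end

section
/- Convolution theorem for the cosine-type transform: for f, g ∈ L¹(ℝ), C(f # g)(t) = C(f)(t) · C(g)(t) for all t ∈ ℝ, where C(h)(t) = ∫_ℝ h(x) cos(xt) dx. -/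
/-!
The product-to-sum formula `cos((x - y)t) + cos((x + y)t) = 2 cos(xt) cos(yt)` shows, after
translating `x`, that `∫ (f(x + y) + f(x - y)) cos(xt) dx = 2 cos(yt) C(f)(t)` for every `y`.
Integrating this against `g(y)/2` and exchanging the order of integration finishes the proof;
Fubini applies because the shears `(x, y) ↦ (x ± y, y)` preserve the product measure.
-/

open MeasureTheory Real Filter Topology

namespace MeasureTheory.Integrable

variable {G : Type*} [MeasurableSpace G] [AddGroup G] [MeasurableAdd₂ G]
  {μ ν : Measure G} [SFinite μ] [SFinite ν] [μ.IsAddRightInvariant] {f g : G → ℝ}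

theorem mul_prod_comp_add (hf : Integrable f μ) (hg : Integrable g ν) :
    Integrable (fun p : G × G => f (p.1 + p.2) * g p.2) (μ.prod ν) :=
  ((measurePreserving_add_prod μ ν).integrable_comp (hf.mul_prod hg).aestronglyMeasurable).mpr
    (hf.mul_prod hg)

theorem mul_prod_comp_sub [MeasurableNeg G] (hf : Integrable f μ) (hg : Integrable g ν) :
    Integrable (fun p : G × G => f (p.1 - p.2) * g p.2) (μ.prod ν) :=
  ((measurePreserving_sub_prod μ ν).integrable_comp (hf.mul_prod hg).aestronglyMeasurable).mpr
    (hf.mul_prod hg)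

end MeasureTheory.Integrable

theorem integrable_mul_cos {α : Type*} [MeasurableSpace α] {μ : Measure α} {f : α → ℝ}
    {φ : α → ℝ} (hf : Integrable f μ) (hφ : Measurable φ) :
    Integrable (fun x => f x * cos (φ x)) μ :=
  hf.mul_bdd (continuous_cos.measurable.comp hφ).aestronglyMeasurable
    (ae_of_all _ fun x => by simpa only [norm_eq_abs] using abs_cos_le_one (φ x))

theorem integral_translates_mul_cos {f : ℝ → ℝ} (hf : Integrable f) (y t : ℝ) :
    ∫ x, (f (x + y) + f (x - y)) * cos (x * t) = 2 * cos (y * t) * cosT f t := by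
  have hplus : ∫ x, f (x + y) * cos (x * t) = ∫ x, f x * cos ((x - y) * t) := by
    simpa using integral_add_right_eq_self (fun x => f x * cos ((x - y) * t)) y
  have hminus : ∫ x, f (x - y) * cos (x * t) = ∫ x, f x * cos ((x + y) * t) := by
    simpa using integral_sub_right_eq_self (fun x => f x * cos ((x + y) * t)) y
  have hmeas (s : ℝ) : Measurable fun x : ℝ => (x + s) * t := by fun_prop
  have hmeas₀ : Measurable fun x : ℝ => x * t := by fun_prop
  calc ∫ x, (f (x + y) + f (x - y)) * cos (x * t)
      = (∫ x, f (x + y) * cos (x * t)) + ∫ x, f (x - y) * cos (x * t) := by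
        simp only [add_mul]
        exact integral_add (integrable_mul_cos (hf.comp_add_right y) hmeas₀)
          (integrable_mul_cos (hf.comp_sub_right y) hmeas₀)
    _ = ∫ x, (f x * cos ((x - y) * t) + f x * cos ((x + y) * t)) := by
        rw [hplus, hminus, integral_add]
        · simpa only [sub_eq_add_neg] using integrable_mul_cos hf (hmeas (-y))
        · exact integrable_mul_cos hf (hmeas y)
    _ = ∫ x, 2 * cos (y * t) * (f x * cos (x * t)) := by
        congr 1 with x
        rw [sub_mul, add_mul, cos_sub, cos_add]
        ring
    _ = 2 * cos (y * t) * cosT f t := integral_const_mul _ _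

theorem integrable_hash_integrand_mul_cos {f g : ℝ → ℝ} (hf : Integrable f) (hg : Integrable g)
    (t : ℝ) :
    Integrable (fun p : ℝ × ℝ => (f (p.1 + p.2) + f (p.1 - p.2)) * g p.2 * cos (p.1 * t))
      (volume.prod volume) := by
  refine integrable_mul_cos ?_ (by fun_prop)
  simp only [add_mul]
  exact (hf.mul_prod_comp_add hg).add (hf.mul_prod_comp_sub hg)

theorem stmt15 (f g : ℝ → ℝ) (hf : Integrable f) (hg : Integrable g) :
    ∀ t : ℝ, cosT (hash f g) t = cosT f t * cosT g t := by
  intro t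
  calc cosT (hash f g) t
      = 1 / 2 * ∫ x, ∫ y, (f (x + y) + f (x - y)) * g y * cos (x * t) := by
        simp only [cosT, _root_.hash, ← integral_const_mul, ← integral_mul_const, mul_assoc]
    _ = 1 / 2 * ∫ y, (∫ x, (f (x + y) + f (x - y)) * cos (x * t)) * g y := by
        rw [integral_integral_swap (integrable_hash_integrand_mul_cos hf hg t)]
        simp only [← integral_mul_const, mul_right_comm _ (g _)]
    _ = cosT f t * ∫ y, g y * cos (y * t) := by
        simp only [integral_translates_mul_cos hf, ← integral_const_mul]
        congr 1 with y
        ring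
end
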